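/- arXiv:0809.2021 — 2 statements merged into one kernel-verified Lean document; each statement's English description precedes it below -/
import Mathlib

section
/- Let R be a Dedekind domain that is not a field. The only prime operation on R is the identity map on the set of ideals of R. -/
/-- A closure operation on the set of ideals of a commutative ring. -/
def IsClosureOperation {R : Type*} [CommRing R] (c : Ideal R → Ideal R) : Prop :=
  (∀ I : Ideal R, I ≤ c I) ∧ (∀ I J : Ideal R, I ≤ J → c I ≤ c J) ∧
    (∀ I : Ideal R, c (c I) = c I)

/-- A semiprime operation: a closure operation satisfying `c I * c J ≤ c (I * J)`. -/
def IsSemiprimeOperation {R : Type*} [CommRing R] (c : Ideal R → Ideal R) : Prop :=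
  IsClosureOperation c ∧ ∀ I J : Ideal R, c I * c J ≤ c (I * J)

/-- A prime operation: a semiprime operation satisfying `c (bI) = b • c I` for every
non-zerodivisor `b`. -/
def IsPrimeOperation {R : Type*} [CommRing R] (c : Ideal R → Ideal R) : Prop :=
  IsSemiprimeOperation c ∧
    ∀ b : R, b ∈ nonZeroDivisors R → ∀ I : Ideal R,
      c (Ideal.span {b} * I) = Ideal.span {b} * c I

/-!
Nonzero ideals of a Dedekind domain are cancellable. A prime operation fixes every principal
ideal `(a) = a·R` with `a ≠ 0`, hence, by semiprimality, for `I * J = (a)` we get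
`c I * J ≤ c I * c J ≤ c (a) = I * J`, and cancelling `J` gives `c I = I`. The zero ideal is
fixed because `c 0 = c (b·0) = b·c 0` for a nonzero nonunit `b`, which would make `(b) = R`
if `c 0` were nonzero.
-/

section

open Ideal

variable {R : Type*} [CommRing R] {c : Ideal R → Ideal R}

theorem isPrimeOperation_id : IsPrimeOperation (id : Ideal R → Ideal R) :=
  ⟨⟨⟨fun _ => le_rfl, fun _ _ h => h, fun _ => rfl⟩, fun _ _ => le_rfl⟩, fun _ _ _ => rfl⟩

theorem IsClosureOperation.map_top (hc : IsClosureOperation c) : c ⊤ = ⊤ :=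
  top_le_iff.mp (hc.1 ⊤)

theorem IsPrimeOperation.map_span_singleton (hc : IsPrimeOperation c) {b : R}
    (hb : b ∈ nonZeroDivisors R) : c (span {b}) = span {b} := by
  simpa only [mul_top, hc.1.1.map_top] using hc.2 b hb ⊤

theorem IsSemiprimeOperation.map_eq_self_of_map_mul_eq [IsDedekindDomain R]
    (hc : IsSemiprimeOperation c) {I J : Ideal R} (hJ : J ≠ ⊥) (hIJ : c (I * J) = I * J) :
    c I = I := by
  refine le_antisymm (le_of_mul_le_mul_left ?_ (pos_iff_ne_zero.mpr hJ)) (hc.1.1 I)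
  calc J * c I ≤ c J * c I := mul_le_mul_left (hc.1.1 J) _
    _ ≤ c (J * I) := hc.2 J I
    _ = J * I := by rw [mul_comm J, hIJ]

theorem IsPrimeOperation.map_eq_self_of_ne_bot [IsDedekindDomain R] (hc : IsPrimeOperation c)
    {I : Ideal R} (hI : I ≠ ⊥) : c I = I := by
  obtain ⟨a, haI, ha⟩ := Submodule.exists_mem_ne_zero_of_ne_bot hI
  obtain ⟨J, hIJ⟩ : I ∣ span {a} := dvd_iff_le.mpr ((span_singleton_le_iff_mem I).mpr haI)
  have hJ : J ≠ ⊥ := by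
    rintro rfl
    exact ha (span_singleton_eq_bot.mp (by rwa [mul_bot] at hIJ))
  refine hc.1.map_eq_self_of_map_mul_eq hJ ?_
  rw [← hIJ]
  exact hc.map_span_singleton (mem_nonZeroDivisors_of_ne_zero ha)

theorem IsPrimeOperation.map_bot [IsDedekindDomain R] (hR : ¬IsField R)
    (hc : IsPrimeOperation c) : c ⊥ = ⊥ := by
  obtain ⟨b, hb, hb_unit⟩ := Ring.exists_not_isUnit_of_not_isField hR
  by_contra hne
  have hfix : span {b} * c ⊥ = ⊤ * c ⊥ := by
    rw [top_mul, ← hc.2 b (mem_nonZeroDivisors_of_ne_zero hb), mul_bot]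
  exact hb_unit (span_singleton_eq_top.mp (mul_right_cancel₀ hne hfix))

end

theorem dedekind_prime_operation_eq_id_general {R : Type*} [CommRing R]
    [IsDedekindDomain R] (hR : ¬ IsField R) (c : Ideal R → Ideal R) :
    IsPrimeOperation c ↔ c = id := by
  refine ⟨fun hc => funext fun I => ?_, fun h => h ▸ isPrimeOperation_id⟩
  rcases eq_or_ne I ⊥ with rfl | hI
  · exact hc.map_bot hR
  · exact hc.map_eq_self_of_ne_bot hI

theorem dedekind_prime_operation_eq_id {R : Type*} [CommRing R] [IsDomain R]
    [IsDedekindDomain R] (hR : ¬ IsField R) (c : Ideal R → Ideal R) :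
    IsPrimeOperation c ↔ c = id :=
  dedekind_prime_operation_eq_id_general hR c
end

section
/- Let K be a field and R = K[[t^2, t^3]]. The only prime operation on R is the identity map on the set of ideals of R. -/
open PowerSeries

/-- A (semiprime) operation is bounded if there is a nonzero proper ideal `J`
such that `c I = J` for every nonzero ideal `I ⊆ J`. -/
def IsBoundedOperation {R : Type*} [CommRing R] (c : Ideal R → Ideal R) : Prop :=
  ∃ J : Ideal R, J ≠ ⊥ ∧ J ≠ ⊤ ∧ ∀ I : Ideal R, I ≠ ⊥ → I ≤ J → c I = J

/-- The ring `K[[t^2, t^3]]`: power series over `K` with vanishing linear coefficient. -/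
def cuspRing (K : Type*) [Field K] : Subring (PowerSeries K) where
  carrier := {f | PowerSeries.coeff (R := K) 1 f = 0}
  zero_mem' := by simp
  one_mem' := by simp
  add_mem' := by
    intro a b ha hb
    simp only [Set.mem_setOf_eq, map_add] at *
    rw [ha, hb, add_zero]
  neg_mem' := by
    intro a ha
    simp only [Set.mem_setOf_eq, map_neg] at *
    rw [ha, neg_zero]
  mul_mem' := by
    intro a b ha hb
    simp only [Set.mem_setOf_eq] at *
    rw [PowerSeries.coeff_mul]
    rw [Finset.Nat.sum_antidiagonal_eq_sum_range_succ_mk]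
    simp [Finset.sum_range_succ, ha, hb]

/-- The principal ideal `P_{n,a} = (t^n + a t^{n+1})` of `K[[t^2,t^3]]`. -/
noncomputable def Pgen (K : Type*) [Field K] (n : ℕ) (a : K) : Ideal (cuspRing K) :=
  Ideal.span {x : cuspRing K |
    (x : PowerSeries K) = X ^ n + PowerSeries.C (R := K) a * X ^ (n + 1)}

/-- The two-generated ideal `M_n = (t^n, t^{n+1})` of `K[[t^2,t^3]]`. -/
noncomputable def Mgen (K : Type*) [Field K] (n : ℕ) : Ideal (cuspRing K) :=
  Ideal.span {x : cuspRing K |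
    (x : PowerSeries K) = X ^ n ∨ (x : PowerSeries K) = X ^ (n + 1)}

/-!
Write `Mₙ = tⁿK[[t]]` (`n ≥ 2`) for `Mgen K n`. If the least order of the elements of a nonzero
ideal `I` is `n`, attained at `x`, then `(x) ⊇ x M₂ = M_{n+2}`, and peeling off leading terms
shows that `I` is `(x)` or `Mₙ`. A prime operation fixes `(b)` for `b ≠ 0`, as
`c (b) = b c(R) = (b)`. Both `t²` and `t² + t³` multiply `Mₙ` onto `M_{n+2}`, so
`t² c(Mₙ) = (t² + t³) c(Mₙ)`: thus `c(Mₙ)` is closed under multiplication by `t`, i.e. it is a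
`K[[t]]`-ideal `M_k`. Extensivity gives `k ≤ n`, and
`M_{k+2} = t² c(Mₙ) = c(M_{n+2}) ⊆ c(tⁿR) = tⁿR` gives `k ≥ n`. Finally `c(0) ⊆ ⋂ₙ c(Mₙ) = 0`.
-/

namespace IsPrimeOperation

variable {R : Type*} [CommRing R] {c : Ideal R → Ideal R}

theorem le_apply (hc : IsPrimeOperation c) (I : Ideal R) : I ≤ c I := hc.1.1.1 I

theorem monotone (hc : IsPrimeOperation c) : Monotone c := hc.1.1.2.1

theorem map_span_singleton_mul (hc : IsPrimeOperation c) {b : R} (hb : b ∈ nonZeroDivisors R)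
    (I : Ideal R) : c (Ideal.span {b} * I) = Ideal.span {b} * c I :=
  hc.2 b hb I

theorem map_top (hc : IsPrimeOperation c) : c ⊤ = ⊤ := top_le_iff.mp (hc.le_apply ⊤)

theorem map_span_singleton_s18 (hc : IsPrimeOperation c) {b : R} (hb : b ∈ nonZeroDivisors R) :
    c (Ideal.span {b}) = Ideal.span {b} := by
  simpa only [Ideal.mul_top, hc.map_top] using hc.map_span_singleton_mul hb ⊤

protected theorem id : IsPrimeOperation (id : Ideal R → Ideal R) :=
  ⟨⟨⟨fun _ => le_rfl, fun _ _ h => h, fun _ => rfl⟩, fun _ _ => le_rfl⟩, fun _ _ _ => rfl⟩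

end IsPrimeOperation

namespace PowerSeries

theorem X_pow_succ_dvd {R : Type*} [Semiring R] {f : R⟦X⟧} {n : ℕ} (hdvd : X ^ n ∣ f)
    (hn : coeff n f = 0) : X ^ (n + 1) ∣ f := by
  rw [X_pow_dvd_iff] at hdvd ⊢
  intro i hi
  rcases Nat.lt_succ_iff_lt_or_eq.mp hi with hi | rfl
  exacts [hdvd i hi, hn]

theorem exists_unit_eq_X_pow_mul {K : Type*} [Field K] {f : K⟦X⟧} {n : ℕ} (hdvd : X ^ n ∣ f)
    (hn : coeff n f ≠ 0) : ∃ u : K⟦X⟧ˣ, f = X ^ n * (u : K⟦X⟧) := by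
  obtain ⟨u, rfl⟩ := hdvd
  have hu : IsUnit u := by
    rw [coeff_X_pow_mul', if_pos le_rfl, Nat.sub_self] at hn
    rwa [isUnit_iff_constantCoeff, ← coeff_zero_eq_constantCoeff_apply, isUnit_iff_ne_zero]
  exact ⟨hu.unit, rfl⟩

end PowerSeries

namespace cuspRing

variable {K : Type*} [Field K]

theorem mem_iff {f : K⟦X⟧} : f ∈ cuspRing K ↔ coeff 1 f = 0 := Iff.rfl

theorem coeff_one_coe (x : cuspRing K) : coeff 1 (x : K⟦X⟧) = 0 := x.2

theorem X_pow_mul_mem {n : ℕ} (hn : 2 ≤ n) (g : K⟦X⟧) : X ^ n * g ∈ cuspRing K := by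
  rw [mem_iff, coeff_X_pow_mul', if_neg (by omega)]

noncomputable def const (a : K) : cuspRing K := ⟨C a, mem_iff.mpr (by simp)⟩

noncomputable def xPow (n : ℕ) (hn : 2 ≤ n) : cuspRing K :=
  ⟨X ^ n, by simpa using X_pow_mul_mem (K := K) hn 1⟩

@[simp] theorem coe_const (a : K) : ((const a : cuspRing K) : K⟦X⟧) = C a := rfl

@[simp] theorem coe_xPow (n : ℕ) (hn : 2 ≤ n) : ((xPow n hn : cuspRing K) : K⟦X⟧) = X ^ n := rfl

theorem mem_nonZeroDivisors_of_coeff_ne_zero {x : cuspRing K} {n : ℕ}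
    (hx : coeff n (x : K⟦X⟧) ≠ 0) : x ∈ nonZeroDivisors (cuspRing K) :=
  mem_nonZeroDivisors_of_ne_zero fun h => hx (by simp [h])

theorem exists_eq_add_C_mul_X (g : K⟦X⟧) :
    ∃ (r : cuspRing K) (a : K), g = (r : K⟦X⟧) + C a * X :=
  ⟨⟨g - C (coeff 1 g) * X, mem_iff.mpr (by simp)⟩, coeff 1 g, by simp⟩

theorem mem_Mgen_iff {n : ℕ} (hn : 2 ≤ n) {x : cuspRing K} :
    x ∈ Mgen K n ↔ X ^ n ∣ (x : K⟦X⟧) := by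
  constructor
  · have hle : Mgen K n ≤ (Ideal.span {X ^ n}).comap (cuspRing K).subtype := by
      refine Ideal.span_le.mpr ?_
      rintro y (hy | hy) <;> simp [Ideal.mem_span_singleton, hy, pow_succ]
    simpa [Ideal.mem_span_singleton] using @hle x
  · rintro ⟨g, hg⟩
    obtain ⟨r, a, rfl⟩ := exists_eq_add_C_mul_X g
    have hx : x = r * xPow n hn + const a * xPow (n + 1) (by omega) :=
      Subtype.ext (by simp only [Subring.coe_add, Subring.coe_mul, coe_const, coe_xPow, hg]; ring)
    rw [hx]
    exact add_mem (Ideal.mul_mem_left _ _ (Ideal.subset_span (Or.inl rfl)))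
      (Ideal.mul_mem_left _ _ (Ideal.subset_span (Or.inr rfl)))

theorem exists_sub_mul_X_pow_succ_dvd {n : ℕ} {x f : cuspRing K} (hx : X ^ n ∣ (x : K⟦X⟧))
    (hxn : coeff n (x : K⟦X⟧) ≠ 0) (hf : X ^ n ∣ (f : K⟦X⟧)) :
    ∃ r : cuspRing K, X ^ (n + 1) ∣ ((f - r * x : cuspRing K) : K⟦X⟧) := by
  refine ⟨const (coeff n (f : K⟦X⟧) / coeff n (x : K⟦X⟧)),
    X_pow_succ_dvd (dvd_sub hf (dvd_mul_of_dvd_right hx _)) ?_⟩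
  simp [hxn]

theorem exists_coeff_ne_zero_forall_X_pow_dvd {I : Ideal (cuspRing K)} (hI : I ≠ ⊥) :
    ∃ n, ∃ x ∈ I, coeff n (x : K⟦X⟧) ≠ 0 ∧ ∀ y ∈ I, X ^ n ∣ (y : K⟦X⟧) := by
  classical
  have hex : ∃ n, ∃ x ∈ I, coeff n (x : K⟦X⟧) ≠ 0 := by
    obtain ⟨x, hxI, hx⟩ := Submodule.exists_mem_ne_zero_of_ne_bot hI
    obtain ⟨n, hn⟩ := exists_coeff_ne_zero_iff_ne_zero.mpr (Subtype.coe_ne_coe.mpr hx)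
    exact ⟨n, x, hxI, hn⟩
  obtain ⟨x, hxI, hx⟩ := Nat.find_spec hex
  refine ⟨Nat.find hex, x, hxI, hx, fun y hy => X_pow_dvd_iff.mpr fun i hi => ?_⟩
  by_contra h
  exact Nat.find_min hex hi ⟨y, hy, h⟩

theorem span_singleton_mul_Mgen {m n : ℕ} (hn : 2 ≤ n) {x : cuspRing K}
    (hx : X ^ m ∣ (x : K⟦X⟧)) (hxm : coeff m (x : K⟦X⟧) ≠ 0) :
    Ideal.span {x} * Mgen K n = Mgen K (m + n) := by
  ext f
  rw [Ideal.mem_span_singleton_mul, mem_Mgen_iff (by omega)]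
  constructor
  · rintro ⟨z, hz, rfl⟩
    rw [Subring.coe_mul, pow_add]
    exact mul_dvd_mul hx ((mem_Mgen_iff hn).mp hz)
  · rintro ⟨g, hg⟩
    obtain ⟨u, hu⟩ := exists_unit_eq_X_pow_mul hx hxm
    refine ⟨⟨X ^ n * ((↑u⁻¹ : K⟦X⟧) * g), X_pow_mul_mem hn _⟩,
      (mem_Mgen_iff hn).mpr (dvd_mul_right _ _), Subtype.ext ?_⟩
    rw [Subring.coe_mul, hu, hg, pow_add]
    calc X ^ m * ↑u * (X ^ n * ((↑u⁻¹ : K⟦X⟧) * g))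
        = X ^ m * X ^ n * g * (↑u * ↑u⁻¹ : K⟦X⟧) := by ring
      _ = X ^ m * X ^ n * g := by rw [Units.mul_inv, mul_one]

theorem isPrincipal_or_eq_Mgen (I : Ideal (cuspRing K)) :
    I.IsPrincipal ∨ ∃ n, 2 ≤ n ∧ I = Mgen K n := by
  rcases eq_or_ne I ⊥ with rfl | hI
  · exact Or.inl bot_isPrincipal
  obtain ⟨n, x, hxI, hxn, hdvd⟩ := exists_coeff_ne_zero_forall_X_pow_dvd hI
  have hxI' : Ideal.span {x} ≤ I := (Ideal.span_singleton_le_iff_mem _).mpr hxI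
  have htail : ∀ y : cuspRing K, X ^ (n + 2) ∣ (y : K⟦X⟧) → y ∈ Ideal.span {x} := by
    intro y hy
    rw [← mem_Mgen_iff (by omega), ← span_singleton_mul_Mgen le_rfl (hdvd x hxI) hxn] at hy
    exact Ideal.mul_le_left hy
  by_cases hle : I ≤ Ideal.span {x}
  · exact Or.inl ⟨x, le_antisymm hle hxI'⟩
  obtain ⟨f, hfI, hf⟩ := SetLike.not_le_iff_exists.mp hle
  obtain ⟨r, hr⟩ := exists_sub_mul_X_pow_succ_dvd (hdvd x hxI) hxn (hdvd f hfI)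
  set e := f - r * x
  have heI : e ∈ I := sub_mem hfI (I.mul_mem_left r hxI)
  have hen : coeff (n + 1) (e : K⟦X⟧) ≠ 0 := fun h => hf <| by
    rw [← sub_add_cancel f (r * x)]
    exact add_mem (htail e (X_pow_succ_dvd hr h))
      (Ideal.mul_mem_left _ r (Ideal.mem_span_singleton_self x))
  have hn : 2 ≤ n := by
    rcases n with _ | _ | n
    · exact absurd (coeff_one_coe e) hen
    · exact absurd (coeff_one_coe x) hxn
    · omega
  refine Or.inr ⟨n, hn, le_antisymm (fun y hy => (mem_Mgen_iff hn).mpr (hdvd y hy)) fun g hg => ?_⟩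
  obtain ⟨r₁, h₁⟩ := exists_sub_mul_X_pow_succ_dvd (hdvd x hxI) hxn ((mem_Mgen_iff hn).mp hg)
  obtain ⟨r₂, h₂⟩ := exists_sub_mul_X_pow_succ_dvd hr hen h₁
  rw [← sub_add_cancel g (r₁ * x), ← sub_add_cancel (g - r₁ * x) (r₂ * e)]
  exact add_mem (add_mem (hxI' (htail _ h₂)) (I.mul_mem_left _ heI)) (I.mul_mem_left _ hxI)

def IsStableUnderX (J : Ideal (cuspRing K)) : Prop :=
  ∀ y ∈ J, ∃ z ∈ J, (z : K⟦X⟧) = X * (y : K⟦X⟧)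

theorem isStableUnderX_of_span_mul_le {J : Ideal (cuspRing K)}
    (hJ : Ideal.span {xPow 2 le_rfl + xPow 3 (by omega)} * J ≤ Ideal.span {xPow 2 le_rfl} * J) :
    IsStableUnderX J := by
  intro y hy
  obtain ⟨w, hwJ, hw⟩ := Ideal.mem_span_singleton_mul.mp
    (hJ (Ideal.mul_mem_mul (Ideal.mem_span_singleton_self _) hy))
  refine ⟨w - y, sub_mem hwJ hy, ?_⟩
  have hw' : (X ^ 2 : K⟦X⟧) * (w : K⟦X⟧) = X ^ 2 * ((y : K⟦X⟧) + X * (y : K⟦X⟧)) := by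
    have := congrArg (fun t : cuspRing K => (t : K⟦X⟧)) hw
    simp only [Subring.coe_mul, Subring.coe_add, coe_xPow] at this
    rw [this]
    ring
  rw [AddSubgroupClass.coe_sub, mul_left_cancel₀ (pow_ne_zero 2 X_ne_zero) hw']
  ring

theorem IsStableUnderX.exists_mul_mem {J : Ideal (cuspRing K)} (hJ : IsStableUnderX J)
    {y : cuspRing K} (hy : y ∈ J) (g : K⟦X⟧) : ∃ z ∈ J, (z : K⟦X⟧) = g * (y : K⟦X⟧) := by
  obtain ⟨r, a, rfl⟩ := exists_eq_add_C_mul_X g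
  obtain ⟨z, hzJ, hz⟩ := hJ y hy
  refine ⟨r * y + const a * z, add_mem (J.mul_mem_left _ hy) (J.mul_mem_left _ hzJ), ?_⟩
  rw [Subring.coe_add, Subring.coe_mul, Subring.coe_mul, coe_const, hz]
  ring

theorem IsStableUnderX.exists_eq_Mgen {J : Ideal (cuspRing K)} (hX : IsStableUnderX J)
    (hJ : J ≠ ⊥) : ∃ k, 2 ≤ k ∧ J = Mgen K k := by
  obtain ⟨k, x, hxJ, hxk, hdvd⟩ := exists_coeff_ne_zero_forall_X_pow_dvd hJ
  obtain ⟨z, -, hz⟩ := hX x hxJ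
  have hk : 2 ≤ k := by
    have hz1 := coeff_one_coe z
    rw [hz, coeff_succ_X_mul] at hz1
    rcases k with _ | _ | k
    · exact absurd hz1 hxk
    · exact absurd (coeff_one_coe x) hxk
    · omega
  refine ⟨k, hk, le_antisymm (fun y hy => (mem_Mgen_iff hk).mpr (hdvd y hy)) fun f hf => ?_⟩
  obtain ⟨g, hg⟩ := (mem_Mgen_iff hk).mp hf
  obtain ⟨u, hu⟩ := exists_unit_eq_X_pow_mul (hdvd x hxJ) hxk
  obtain ⟨w, hwJ, hw⟩ := hX.exists_mul_mem hxJ ((↑u⁻¹ : K⟦X⟧) * g)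
  convert hwJ
  apply Subtype.ext
  rw [hw, hg, hu]
  calc X ^ k * g = X ^ k * g * (↑u * ↑u⁻¹ : K⟦X⟧) := by rw [Units.mul_inv, mul_one]
    _ = ↑u⁻¹ * g * (X ^ k * ↑u) := by ring

theorem Mgen_ne_bot {n : ℕ} (hn : 2 ≤ n) : Mgen K n ≠ ⊥ :=
  Submodule.ne_bot_iff _ |>.mpr ⟨xPow n hn, (mem_Mgen_iff hn).mpr dvd_rfl,
    nonZeroDivisors.ne_zero (mem_nonZeroDivisors_of_coeff_ne_zero (n := n) (by simp))⟩

theorem Mgen_le_Mgen_iff {m n : ℕ} (hm : 2 ≤ m) (hn : 2 ≤ n) :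
    Mgen K m ≤ Mgen K n ↔ n ≤ m := by
  constructor
  · intro h
    have := (mem_Mgen_iff hn).mp (h ((mem_Mgen_iff hm).mpr (dvd_refl (X ^ m)) : xPow m hm ∈ _))
    exact (pow_dvd_pow_iff X_ne_zero X_prime.not_isUnit).mp this
  · intro hnm y hy
    exact (mem_Mgen_iff hn).mpr ((pow_dvd_pow X hnm).trans ((mem_Mgen_iff hm).mp hy))

theorem add_two_le_of_Mgen_le_span {j m : ℕ} (hj : 2 ≤ j) (hm : 2 ≤ m)
    (h : Mgen K j ≤ Ideal.span {xPow m hm}) : m + 2 ≤ j := by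
  by_contra hlt
  obtain ⟨r, hr⟩ := Ideal.mem_span_singleton'.mp <|
    h ((mem_Mgen_iff hj).mpr (pow_dvd_pow X (by omega : j ≤ m + 1)) : xPow (m + 1) (by omega) ∈ _)
  have hrX : (r : K⟦X⟧) = X := by
    refine mul_right_cancel₀ (pow_ne_zero m X_ne_zero) ?_
    have := congrArg (fun t : cuspRing K => (t : K⟦X⟧)) hr
    simp only [Subring.coe_mul, coe_xPow] at this
    rw [this, pow_succ, mul_comm]
  simpa [hrX] using coeff_one_coe r

end cuspRing

namespace IsPrimeOperation

open cuspRing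

variable {K : Type*} [Field K] {c : Ideal (cuspRing K) → Ideal (cuspRing K)}

theorem map_Mgen (hc : IsPrimeOperation c) {n : ℕ} (hn : 2 ≤ n) : c (Mgen K n) = Mgen K n := by
  have hmul {b : cuspRing K} (hb : X ^ 2 ∣ (b : K⟦X⟧)) (hb2 : coeff 2 (b : K⟦X⟧) ≠ 0) :
      Ideal.span {b} * c (Mgen K n) = c (Mgen K (2 + n)) := by
    rw [← hc.map_span_singleton_mul (mem_nonZeroDivisors_of_coeff_ne_zero hb2),
      span_singleton_mul_Mgen hn hb hb2]
  have ht : Ideal.span {xPow 2 le_rfl} * c (Mgen K n) = c (Mgen K (2 + n)) :=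
    hmul (by simp) (by simp)
  have ht' : Ideal.span {xPow 2 le_rfl + xPow 3 (by omega)} * c (Mgen K n) = c (Mgen K (2 + n)) :=
    hmul (by simp [pow_succ]) (by simp [coeff_X_pow])
  obtain ⟨k, hk, hck⟩ := (isStableUnderX_of_span_mul_le (ht'.trans ht.symm).le).exists_eq_Mgen
    (ne_bot_of_le_ne_bot (Mgen_ne_bot hn) (hc.le_apply _))
  have hkn : k ≤ n := (Mgen_le_Mgen_iff hn hk).mp (hck ▸ hc.le_apply _)
  have hnk : n + 2 ≤ k + 2 := by
    refine add_two_le_of_Mgen_le_span (K := K) (by omega) hn ?_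
    calc Mgen K (k + 2) = Ideal.span {xPow 2 le_rfl} * c (Mgen K n) := by
          rw [hck, span_singleton_mul_Mgen (m := 2) hk (by simp) (by simp), add_comm]
      _ = c (Mgen K (2 + n)) := ht
      _ ≤ c (Ideal.span {xPow n hn}) := hc.monotone <| by
          rw [add_comm, ← span_singleton_mul_Mgen le_rfl (x := xPow n hn) (by simp) (by simp)]
          exact Ideal.mul_le_left
      _ = Ideal.span {xPow n hn} :=
          hc.map_span_singleton_s18 (mem_nonZeroDivisors_of_coeff_ne_zero (n := n) (by simp))
  rw [hck, le_antisymm hkn (by omega)]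

theorem map_bot_s18 (hc : IsPrimeOperation c) : c ⊥ = ⊥ := by
  refine eq_bot_iff.mpr fun x hx => ?_
  have hdvd (n : ℕ) : X ^ (n + 2) ∣ (x : K⟦X⟧) := by
    rw [← mem_Mgen_iff (by omega), ← hc.map_Mgen (by omega)]
    exact hc.monotone bot_le hx
  exact Subtype.ext <| PowerSeries.ext fun i => X_pow_dvd_iff.mp (hdvd i) i (by omega)

end IsPrimeOperation

open cuspRing in
theorem cusp_prime_operation_eq_id {K : Type*} [Field K]
    (c : Ideal (cuspRing K) → Ideal (cuspRing K)) :
    IsPrimeOperation c ↔ c = id := by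
  refine ⟨fun hc => funext fun I => ?_, fun h => h ▸ IsPrimeOperation.id⟩
  obtain ⟨⟨b, rfl⟩⟩ | ⟨n, hn, rfl⟩ := isPrincipal_or_eq_Mgen I
  · rcases eq_or_ne b 0 with rfl | hb
    · simpa using hc.map_bot_s18
    · exact hc.map_span_singleton_s18 (mem_nonZeroDivisors_of_ne_zero hb)
  · exact hc.map_Mgen hn
end
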